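/- Let Q_1, Q_2 be positive definite Hermitian matrices on a finite-dimensional complex inner product space, let t ∈ ℝ, and set R_k := Q_k (Q_k + I)^{−1} and W_t := R_1^{t/2} R_2^{1−t} R_1^{t/2} (real powers of positive definite matrices via the functional calculus). Then det[(Q_1+I)^t (Q_2+I)^{1−t} − Q_1^t Q_2^{1−t}] = det(Q_1+I)^t · det(Q_2+I)^{1−t} · det(I − W_t). In particular, if additionally W_t ≺ I, then log det[(Q_1+I)^t (Q_2+I)^{1−t} − Q_1^t Q_2^{1−t}] = t Tr log(Q_1+I) + (1−t) Tr log(Q_2+I) + Tr log(I − W_t), and this hypothesis W_t ≺ I holds automatically for all t ∈ [0,1]. -/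

import Mathlib

/-!
Everything is a function of `Q₁` or of `Q₂`, so the functional calculus turns the matrix
identities into scalar ones. From `x ^ s = (x + 1) ^ s * (x / (x + 1)) ^ s` we get
`Q ^ s = (Q + 1) ^ s R ^ s` with commuting factors, hence the matrix in question is
`(Q₁ + 1) ^ t (1 - C (C R₂ ^ (1 - t))) (Q₂ + 1) ^ (1 - t)` with `C = R₁ ^ (t / 2)`, and
Sylvester's identity `det (1 - X Y) = det (1 - Y X)` turns the middle factor into `1 - W_t`.
The logarithmic form follows from `log det = Tr log` for positive definite matrices.
For `t ∈ [0, 1]`, the spectra of `R₁, R₂` lie in `[0, m]` for some `m < 1`; then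
`R₂ ^ (1 - t) ≤ m ^ (1 - t)`, and conjugating by `C` gives `W_t ≤ m ^ (1 - t) R₁ ^ t ≤ m`.
-/

open Matrix
open scoped ComplexOrder

noncomputable section

variable {n : Type*} [Fintype n] [DecidableEq n]

/-- Real power `A^t` of a positive matrix via the continuous functional calculus. -/
def mpow (A : Matrix n n ℂ) (t : ℝ) : Matrix n n ℂ := cfc (fun x : ℝ => x ^ t) A

/-- Logarithm of a positive definite matrix via the continuous functional calculus. -/
def mlog (A : Matrix n n ℂ) : Matrix n n ℂ := cfc Real.log A

/-- `R_k = Q_k (Q_k + I)⁻¹`. -/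
def Rmat (Q : Matrix n n ℂ) : Matrix n n ℂ := Q * (Q + 1)⁻¹

/-- `W_t = R₁^{t/2} R₂^{1−t} R₁^{t/2}`. -/
def Wmat (Q₁ Q₂ : Matrix n n ℂ) (t : ℝ) : Matrix n n ℂ :=
  mpow (Rmat Q₁) (t / 2) * mpow (Rmat Q₂) (1 - t) * mpow (Rmat Q₁) (t / 2)

open scoped MatrixOrder

variable {A B Q Q₁ Q₂ : Matrix n n ℂ}

lemma Complex.log_mul_of_pos {z w : ℂ} (hz : 0 < z) (hw : 0 < w) :
    Complex.log (z * w) = Complex.log z + Complex.log w := by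
  have hre := (Complex.pos_iff.mp hz).1
  rw [Complex.eq_re_of_ofReal_le hz.le, Complex.log_ofReal_mul hre hw.ne',
    Complex.ofReal_log hre.le]

lemma Set.Finite.exists_bound_lt_of_forall_lt {S : Set ℝ} (hS : S.Finite) {a r : ℝ} (ha : a < r)
    (h : ∀ x ∈ S, x < r) : ∃ m, a ≤ m ∧ m < r ∧ ∀ x ∈ S, x ≤ m := by
  obtain ⟨m, hm, hmax⟩ := (insert a S).exists_max_image id (hS.insert a) ⟨a, Set.mem_insert a S⟩
  refine ⟨m, hmax a (Set.mem_insert a S), ?_, fun x hx => hmax x (Set.mem_insert_of_mem a hx)⟩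
  rcases hm with rfl | hm
  exacts [ha, h m hm]

namespace Matrix

lemma continuousOn_spectrum (f : ℝ → ℝ) (A : Matrix n n ℂ) : ContinuousOn f (spectrum ℝ A) :=
  A.finite_real_spectrum.continuousOn f

lemma PosSemidef.spectrum_nonneg (hA : A.PosSemidef) : ∀ x ∈ spectrum ℝ A, 0 ≤ x :=
  (StarOrderedRing.nonneg_iff_spectrum_nonneg A).mp (nonneg_iff_posSemidef.mpr hA)

lemma PosDef.spectrum_pos (hA : A.PosDef) : ∀ x ∈ spectrum ℝ A, 0 < x :=
  (StarOrderedRing.isStrictlyPositive_iff_spectrum_pos A hA.isHermitian).mp hA.isStrictlyPositive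

lemma IsHermitian.trace_cfc (hA : A.IsHermitian) (f : ℝ → ℝ) :
    (cfc f A).trace = ∑ i, (f (hA.eigenvalues i) : ℂ) := by
  rw [hA.cfc_eq, IsHermitian.cfc, Unitary.conjStarAlgAut_apply, trace_mul_cycle,
    Unitary.coe_star_mul_self, Matrix.one_mul, trace_diagonal]
  rfl

lemma posDef_one_sub_of_le_algebraMap {m : ℝ} (hm : m < 1) (h : A ≤ algebraMap ℝ _ m) :
    (1 - A).PosDef := by
  have hsplit : 1 - A = (1 - m) • (1 : Matrix n n ℂ) + (algebraMap ℝ _ m - A) := by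
    rw [Algebra.algebraMap_eq_smul_one, sub_smul, one_smul]
    abel
  rw [hsplit]
  exact (PosDef.one.smul (sub_pos.mpr hm)).add_posSemidef h

end Matrix

lemma mpow_cfc (f : ℝ → ℝ) (s : ℝ) (hA : IsSelfAdjoint A) :
    mpow (cfc f A) s = cfc (fun x => f x ^ s) A :=
  (cfc_comp' (· ^ s) f A ((A.finite_real_spectrum.image f).continuousOn _)
    (continuousOn_spectrum _ _)).symm

lemma add_one_eq_cfc (hA : IsSelfAdjoint A) : A + 1 = cfc (fun x : ℝ => x + 1) A := by
  rw [cfc_add_const 1 (fun x : ℝ => x) A, cfc_id' ℝ A, map_one]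

lemma Rmat_eq_cfc (hQ : Q.PosSemidef) : Rmat Q = cfc (fun x : ℝ => x / (x + 1)) Q := by
  have hinv : (Q + 1)⁻¹ = cfc (fun x : ℝ => (x + 1)⁻¹) Q := by
    rw [cfc_inv (fun x : ℝ => x + 1) Q fun x hx => by linarith [hQ.spectrum_nonneg x hx],
      ← add_one_eq_cfc hQ.isHermitian, Matrix.nonsing_inv_eq_ringInverse]
  rw [Rmat.eq_def, hinv]
  nth_rw 1 [← cfc_id' ℝ Q]
  rw [← cfc_mul _ _ Q (continuousOn_spectrum _ _) (continuousOn_spectrum _ _)]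
  simp_rw [div_eq_mul_inv]

lemma Rmat_posSemidef (hQ : Q.PosSemidef) : (Rmat Q).PosSemidef := by
  rw [Rmat_eq_cfc hQ, ← nonneg_iff_posSemidef]
  exact cfc_nonneg fun x hx => by have := hQ.spectrum_nonneg x hx; positivity

lemma spectrum_Rmat_lt_one (hQ : Q.PosSemidef) : ∀ x ∈ spectrum ℝ (Rmat Q), x < 1 := by
  rw [Rmat_eq_cfc hQ, cfc_map_spectrum (R := ℝ) (f := fun x : ℝ => x / (x + 1)) (a := Q)
    hQ.isHermitian.isSelfAdjoint (continuousOn_spectrum _ _)]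
  rintro _ ⟨x, hx, rfl⟩
  have := hQ.spectrum_nonneg x hx
  rw [div_lt_one (by linarith)]
  linarith

lemma mpow_eq_mpow_add_one_mul_mpow_Rmat (hQ : Q.PosSemidef) (s : ℝ) :
    mpow Q s = mpow (Q + 1) s * mpow (Rmat Q) s := by
  have hQ' : IsSelfAdjoint Q := hQ.isHermitian
  rw [add_one_eq_cfc hQ', Rmat_eq_cfc hQ, mpow_cfc _ _ hQ', mpow_cfc _ _ hQ',
    ← cfc_mul _ _ Q (continuousOn_spectrum _ _) (continuousOn_spectrum _ _)]
  refine cfc_congr fun x hx => ?_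
  have hx := hQ.spectrum_nonneg x hx
  rw [← Real.mul_rpow (by linarith) (by positivity), mul_div_cancel₀ x (by linarith)]

lemma commute_mpow_add_one_mpow_Rmat (hQ : Q.PosSemidef) (s r : ℝ) :
    Commute (mpow (Q + 1) s) (mpow (Rmat Q) r) := by
  have hQ' : IsSelfAdjoint Q := hQ.isHermitian
  rw [add_one_eq_cfc hQ', Rmat_eq_cfc hQ, mpow_cfc _ _ hQ', mpow_cfc _ _ hQ']
  exact cfc_commute_cfc _ _ Q

lemma mpow_half_mul_mpow_half (hA : A.PosSemidef) (s : ℝ) :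
    mpow A (s / 2) * mpow A (s / 2) = mpow A s := by
  simp only [mpow]
  rw [← cfc_mul _ _ A (continuousOn_spectrum _ _) (continuousOn_spectrum _ _)]
  refine cfc_congr fun x hx => ?_
  rw [← sq, ← Real.rpow_natCast, ← Real.rpow_mul (hA.spectrum_nonneg x hx)]
  norm_num

lemma Matrix.PosDef.mpow (hA : A.PosDef) (r : ℝ) : (mpow A r).PosDef :=
  IsStrictlyPositive.posDef ((cfc_isStrictlyPositive_iff _ A (continuousOn_spectrum _ _)
    hA.isHermitian).mpr fun x hx => Real.rpow_pos_of_pos (hA.spectrum_pos x hx) r)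

lemma mlog_mpow (hA : A.PosDef) (r : ℝ) : mlog (mpow A r) = r • mlog A := by
  have hA' : IsSelfAdjoint A := hA.isHermitian
  rw [mlog, mpow, ← cfc_comp' Real.log (· ^ r) A ((A.finite_real_spectrum.image _).continuousOn _)
    (continuousOn_spectrum _ _) hA', mlog,
    ← cfc_const_mul r Real.log A (continuousOn_spectrum _ _)]
  exact cfc_congr fun x hx => Real.log_rpow (hA.spectrum_pos x hx) r

lemma log_det_eq_trace_mlog (hA : A.PosDef) : Complex.log A.det = (mlog A).trace := by
  have hpos := hA.eigenvalues_pos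
  rw [hA.isHermitian.det_eq_prod_eigenvalues, mlog, hA.isHermitian.trace_cfc]
  simp only [RCLike.ofReal_eq_complex_ofReal]
  rw [← Complex.ofReal_prod, ← Complex.ofReal_log (Finset.prod_nonneg fun i _ => (hpos i).le),
    Real.log_prod fun i _ => (hpos i).ne', Complex.ofReal_sum]

lemma log_det_mpow (hA : A.PosDef) (r : ℝ) :
    Complex.log (mpow A r).det = r * (mlog A).trace := by
  rw [log_det_eq_trace_mlog (hA.mpow r), mlog_mpow hA, trace_smul, Complex.real_smul]

theorem det_mpow_mul_sub_eq_mul_det_one_sub_Wmat (hQ₁ : Q₁.PosSemidef) (hQ₂ : Q₂.PosSemidef)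
    (t : ℝ) :
    (mpow (Q₁ + 1) t * mpow (Q₂ + 1) (1 - t) - mpow Q₁ t * mpow Q₂ (1 - t)).det =
      (mpow (Q₁ + 1) t).det * (mpow (Q₂ + 1) (1 - t)).det * (1 - Wmat Q₁ Q₂ t).det := by
  set C := mpow (Rmat Q₁) (t / 2)
  have hsplit : mpow (Q₁ + 1) t * mpow (Q₂ + 1) (1 - t) - mpow Q₁ t * mpow Q₂ (1 - t) =
      mpow (Q₁ + 1) t * (1 - C * (C * mpow (Rmat Q₂) (1 - t))) * mpow (Q₂ + 1) (1 - t) := by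
    rw [mpow_eq_mpow_add_one_mul_mpow_Rmat hQ₁, mpow_eq_mpow_add_one_mul_mpow_Rmat hQ₂,
      (commute_mpow_add_one_mpow_Rmat hQ₂ _ _).eq, ← mpow_half_mul_mpow_half (Rmat_posSemidef hQ₁)]
    noncomm_ring
  rw [hsplit, det_mul, det_mul, det_one_sub_mul_comm, Wmat, Matrix.mul_assoc]
  ring

lemma mpow_half_mul_mpow_mul_mpow_half_le {m s : ℝ} (hA : A.PosSemidef) (hB : B.PosSemidef)
    (hm : 0 ≤ m) (hAm : ∀ x ∈ spectrum ℝ A, x ≤ m) (hBm : ∀ x ∈ spectrum ℝ B, x ≤ m)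
    (hs₀ : 0 ≤ s) (hs₁ : s ≤ 1) :
    mpow A (s / 2) * mpow B (1 - s) * mpow A (s / 2) ≤ algebraMap ℝ _ m := by
  have hB' : mpow B (1 - s) ≤ algebraMap ℝ _ (m ^ (1 - s)) :=
    cfc_le_algebraMap _ _ B (fun x hx =>
      Real.rpow_le_rpow (hB.spectrum_nonneg x hx) (hBm x hx) (by linarith))
      (continuousOn_spectrum _ _) hB.isHermitian
  have hC : IsSelfAdjoint (mpow A (s / 2)) := cfc_predicate _ _
  calc _ ≤ mpow A (s / 2) * algebraMap ℝ _ (m ^ (1 - s)) * mpow A (s / 2) :=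
        hC.conjugate_le_conjugate hB'
    _ = cfc (fun x => m ^ (1 - s) * x ^ s) A := by
        rw [← Algebra.commutes, Matrix.mul_assoc, mpow_half_mul_mpow_half hA, ← Algebra.smul_def,
          mpow, cfc_const_mul _ _ A (continuousOn_spectrum _ _)]
    _ ≤ algebraMap ℝ _ m := by
        refine cfc_le_algebraMap _ _ A (fun x hx => ?_) (continuousOn_spectrum _ _) hA.isHermitian
        calc m ^ (1 - s) * x ^ s ≤ m ^ (1 - s) * m ^ s := by
              gcongr
              exacts [hA.spectrum_nonneg x hx, hAm x hx]
          _ = m := by rw [← Real.rpow_add' hm (by norm_num), sub_add_cancel, Real.rpow_one]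

lemma one_sub_Wmat_posDef (hQ₁ : Q₁.PosSemidef) (hQ₂ : Q₂.PosSemidef) {s : ℝ} (hs₀ : 0 ≤ s)
    (hs₁ : s ≤ 1) : (1 - Wmat Q₁ Q₂ s).PosDef := by
  have hfin := (Rmat Q₁).finite_real_spectrum.union (Rmat Q₂).finite_real_spectrum
  obtain ⟨m, hm₀, hm₁, hm⟩ := hfin.exists_bound_lt_of_forall_lt zero_lt_one fun x hx =>
    hx.elim (spectrum_Rmat_lt_one hQ₁ x) (spectrum_Rmat_lt_one hQ₂ x)
  exact posDef_one_sub_of_le_algebraMap hm₁ <|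
    mpow_half_mul_mpow_mul_mpow_half_le (Rmat_posSemidef hQ₁) (Rmat_posSemidef hQ₂) hm₀
      (fun x hx => hm x (Or.inl hx)) (fun x hx => hm x (Or.inr hx)) hs₀ hs₁

theorem det_factorization_W
    (Q₁ Q₂ : Matrix n n ℂ) (hQ₁ : Q₁.PosDef) (hQ₂ : Q₂.PosDef) (t : ℝ) :
    (mpow (Q₁ + 1) t * mpow (Q₂ + 1) (1 - t) - mpow Q₁ t * mpow Q₂ (1 - t)).det =
        (mpow (Q₁ + 1) t).det * (mpow (Q₂ + 1) (1 - t)).det * (1 - Wmat Q₁ Q₂ t).det ∧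
      ((1 - Wmat Q₁ Q₂ t).PosDef →
        Complex.log
            (mpow (Q₁ + 1) t * mpow (Q₂ + 1) (1 - t) - mpow Q₁ t * mpow Q₂ (1 - t)).det =
          (t : ℂ) * (mlog (Q₁ + 1)).trace + ((1 : ℂ) - (t : ℂ)) * (mlog (Q₂ + 1)).trace +
            (mlog (1 - Wmat Q₁ Q₂ t)).trace) ∧
      (∀ s ∈ Set.Icc (0 : ℝ) 1, (1 - Wmat Q₁ Q₂ s).PosDef) := by
  have hP₁ : (Q₁ + 1).PosDef := hQ₁.add_posSemidef PosSemidef.one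
  have hP₂ : (Q₂ + 1).PosDef := hQ₂.add_posSemidef PosSemidef.one
  have hdet := det_mpow_mul_sub_eq_mul_det_one_sub_Wmat hQ₁.posSemidef hQ₂.posSemidef t
  refine ⟨hdet, fun hW => ?_,
    fun s hs => one_sub_Wmat_posDef hQ₁.posSemidef hQ₂.posSemidef hs.1 hs.2⟩
  have hd₁ := (hP₁.mpow t).det_pos
  have hd₂ := (hP₂.mpow (1 - t)).det_pos
  rw [hdet, Complex.log_mul_of_pos (mul_pos hd₁ hd₂) hW.det_pos, Complex.log_mul_of_pos hd₁ hd₂,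
    log_det_mpow hP₁, log_det_mpow hP₂, log_det_eq_trace_mlog hW]
  push_cast
  ring

end
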